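/- For every vector ψ ∈ ℂ², the 8×8 matrix V = CCZ · (H ⊗ I ⊗ I) · CCZ · (H ⊗ I ⊗ I) (with H acting on the first qubit) satisfies V (|+i⟩ ⊗ |1⟩ ⊗ ψ) = |+i⟩ ⊗ |1⟩ ⊗ (S ψ). That is, the S gate is realized by gates from {H, CCZ} together with the resource state |+i⟩ and the ancillary basis state |1⟩. -/

import Mathlib

open Matrix Kronecker

/-- |1⟩ -/
noncomputable def ket1 : Fin 2 → ℂ := ![0, 1]

/-- |1⟩⟨1| -/
noncomputable def proj1 : Matrix (Fin 2) (Fin 2) ℂ := !![0, 0; 0, 1]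

/-- |11⟩⟨11| = |1⟩⟨1| ⊗ |1⟩⟨1| -/
noncomputable def proj11 : Matrix (Fin 2 × Fin 2) (Fin 2 × Fin 2) ℂ := proj1 ⊗ₖ proj1

/-- Pauli Z. -/
noncomputable def PauliZ : Matrix (Fin 2) (Fin 2) ℂ := !![1, 0; 0, -1]

/-- S gate. -/
noncomputable def Sgate : Matrix (Fin 2) (Fin 2) ℂ := !![1, 0; 0, Complex.I]

/-- Hadamard gate. -/
noncomputable def Hgate : Matrix (Fin 2) (Fin 2) ℂ :=
  (1 / Real.sqrt 2 : ℝ) • !![1, 1; 1, -1]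

/-- |+i⟩ = (|0⟩ + i|1⟩)/√2 -/
noncomputable def ketPlusI : Fin 2 → ℂ :=
  ![1 / Real.sqrt 2, Complex.I / Real.sqrt 2]

/-- CCZ = (I₄ − |11⟩⟨11|) ⊗ I + |11⟩⟨11| ⊗ Z, reassociated to act on
    qubit₁ × (qubit₂ × qubit₃). -/
noncomputable def CCZ : Matrix (Fin 2 × (Fin 2 × Fin 2)) (Fin 2 × (Fin 2 × Fin 2)) ℂ :=
  Matrix.reindex (Equiv.prodAssoc (Fin 2) (Fin 2) (Fin 2))
    (Equiv.prodAssoc (Fin 2) (Fin 2) (Fin 2))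
    (((1 : Matrix (Fin 2 × Fin 2) (Fin 2 × Fin 2) ℂ) - proj11) ⊗ₖ
        (1 : Matrix (Fin 2) (Fin 2) ℂ) +
      proj11 ⊗ₖ PauliZ)

/-- Kronecker product of vectors. -/
def vecKron {m n : Type*} (v : m → ℂ) (w : n → ℂ) : m × n → ℂ :=
  fun p => v p.1 * w p.2

lemma kron_mulVec {m n : Type*} [Fintype m] [Fintype n] [DecidableEq m] [DecidableEq n]
    (A : Matrix m m ℂ) (B : Matrix n n ℂ) (v : m → ℂ) (w : n → ℂ) :
    (A ⊗ₖ B) *ᵥ vecKron v w = vecKron (A *ᵥ v) (B *ᵥ w) := by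
  funext ⟨i, j⟩
  simp only [Matrix.mulVec, dotProduct, vecKron, Matrix.kroneckerMap_apply,
    Fintype.sum_prod_type, Finset.mul_sum, Finset.sum_mul]
  rw [Finset.sum_comm]
  exact Finset.sum_congr rfl fun k _ => Finset.sum_congr rfl fun l _ => by ring

/-- CCZ action on states with second qubit |1⟩. -/
lemma CCZ_apply (x y : Fin 2 → ℂ) :
    CCZ *ᵥ vecKron x (vecKron ket1 y)
      = vecKron ![x 0, 0] (vecKron ket1 y) + vecKron ![0, x 1] (vecKron ket1 (PauliZ *ᵥ y)) := by
  funext ⟨a, b, c⟩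
  simp only [CCZ, Matrix.mulVec, dotProduct, Fintype.sum_prod_type, Fin.sum_univ_two,
    Matrix.reindex_apply, Matrix.submatrix_apply, Equiv.prodAssoc_symm_apply,
    Matrix.add_apply, Matrix.sub_apply, Matrix.kroneckerMap_apply, Matrix.one_apply,
    proj11, proj1, PauliZ, ket1, vecKron, Pi.add_apply]
  fin_cases a <;> fin_cases b <;> fin_cases c <;>
    simp [Prod.ext_iff]

set_option maxHeartbeats 1000000 in
theorem s_gate_from_H_CCZ_plusI_and_one (ψ : Fin 2 → ℂ) :
    (CCZ * (Hgate ⊗ₖ ((1 : Matrix (Fin 2) (Fin 2) ℂ) ⊗ₖ (1 : Matrix (Fin 2) (Fin 2) ℂ))) *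
        CCZ * (Hgate ⊗ₖ ((1 : Matrix (Fin 2) (Fin 2) ℂ) ⊗ₖ (1 : Matrix (Fin 2) (Fin 2) ℂ)))) *ᵥ
        vecKron ketPlusI (vecKron ket1 ψ)
      = vecKron ketPlusI (vecKron ket1 (Sgate *ᵥ ψ)) := by
  simp only [← Matrix.mulVec_mulVec, kron_mulVec, Matrix.one_mulVec,
    Matrix.mulVec_add, CCZ_apply]
  have hs : ((Real.sqrt 2 : ℝ) : ℂ) ^ 2 = 2 := by
    norm_cast; exact Real.sq_sqrt (by norm_num)
  have h2 : ((Real.sqrt 2 : ℝ) : ℂ) ≠ 0 := by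
    norm_cast; positivity
  have h3 : ((Real.sqrt 2 : ℝ) : ℂ) ^ 3 = 2 * ((Real.sqrt 2 : ℝ) : ℂ) := by
    rw [pow_succ, hs]
  have h4 : ((Real.sqrt 2 : ℝ) : ℂ) ^ 4 = 4 := by
    rw [show ((Real.sqrt 2 : ℝ) : ℂ) ^ 4 = (((Real.sqrt 2 : ℝ) : ℂ) ^ 2) ^ 2 by ring, hs]
    norm_num
  have h6 : ((Real.sqrt 2 : ℝ) : ℂ) ^ 6 = 8 := by
    rw [show ((Real.sqrt 2 : ℝ) : ℂ) ^ 6 = (((Real.sqrt 2 : ℝ) : ℂ) ^ 2) ^ 3 by ring, hs]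
    norm_num
  funext ⟨a, b, c⟩
  simp only [Pi.add_apply, vecKron, Hgate, ketPlusI, ket1, PauliZ, Sgate,
    Matrix.mulVec, dotProduct, Fin.sum_univ_two, Matrix.smul_apply,
    Matrix.cons_val', Matrix.cons_val_zero, Matrix.cons_val_one, Matrix.head_cons,
    Matrix.empty_val', Matrix.cons_val_fin_one, Matrix.head_fin_const, smul_eq_mul]
  fin_cases a <;> fin_cases b <;> fin_cases c <;>
    simp only [Fin.zero_eta, Fin.mk_one, Matrix.of_apply, Matrix.cons_val', Matrix.cons_val_zero,
      Matrix.cons_val_one, Matrix.head_cons, Matrix.empty_val', Matrix.cons_val_fin_one,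
      Complex.real_smul, Complex.ofReal_inv] <;>
    (try field_simp) <;> (try ring_nf) <;>
    (try simp only [Complex.ofReal_inv, inv_pow, hs, h3, h4, h6, Complex.I_sq]) <;> (try ring)
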